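/- arXiv:2408.01062 — 2 statements merged into one kernel-verified Lean document; each statement's English description precedes it below -/
import Mathlib

section
/- Let Σ be a d×d real positive semidefinite matrix, let t = Tr(Σ²), and let x be a centered Gaussian random vector on ℝ^d with covariance Σ. Then for all deterministic u, v ∈ ℝ^d: E[(⟨u,x⟩³ − 3t·⟨u,x⟩)·(⟨v,x⟩³ − 3t·⟨v,x⟩)] = 9·(uᵀΣv)·(uᵀΣu − t)·(vᵀΣv − t) + 6·(uᵀΣv)³. -/
/-!
Writing `x = Σ^{1/2} g` with `g` standard Gaussian, `⟨u, x⟩ = ⟨p, g⟩` for `p = Σ^{1/2} u`, and the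
Gram matrix of `p, q` is the Gram matrix of `u, v` for the form `Σ`. Each `⟨w, g⟩` is a centred
Gaussian of variance `|w|²`, whose even moments `(2k-1)‼ |w|^(2k)` follow from Stein's identity
`E[X^(n+2)] = (n+1) σ² E[X^n]`. Expanding `E[⟨p + s q, g⟩^(2k)] = (2k-1)‼ |p + s q|^(2k)` in `s`
and comparing coefficients gives the mixed moments `E[⟨p, g⟩^i ⟨q, g⟩^j]` for `i + j ≤ 6`, and the
Hermite product is a linear combination of those.
-/

open Matrix MeasureTheory ProbabilityTheory

/-- The positive semidefinite square root of a positive semidefinite matrix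
(the definition `Matrix.PosSemidef.sqrt` of the older Mathlib, since removed). -/
noncomputable def Matrix.PosSemidef.sqrt {n : Type*} [Fintype n] [DecidableEq n]
    {A : Matrix n n ℝ} (hA : A.PosSemidef) : Matrix n n ℝ :=
  hA.1.eigenvectorUnitary.1 * diagonal ((↑) ∘ (√·) ∘ hA.1.eigenvalues) *
  (star hA.1.eigenvectorUnitary : Matrix n n ℝ)

/-- The standard Gaussian measure on `ℝ^d` (i.i.d. standard normal coordinates). -/
noncomputable def stdGaussianPi (d : ℕ) : Measure (Fin d → ℝ) :=
  Measure.pi fun _ : Fin d => gaussianReal 0 1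

open Real WithLp
open scoped NNReal Nat

namespace ProbabilityTheory

lemma hasDerivAt_gaussianPDFReal (μ : ℝ) (v : ℝ≥0) (x : ℝ) :
    HasDerivAt (gaussianPDFReal μ v) (-(x - μ) / v * gaussianPDFReal μ v x) x := by
  have h : HasDerivAt (fun y ↦ -(y - μ) ^ 2 / (2 * v)) (-(x - μ) / v) x := by
    refine ((((hasDerivAt_id x).sub_const μ).pow 2).neg.div_const (2 * (v : ℝ))).congr_deriv ?_
    simp only [id, Nat.cast_ofNat]
    ring
  exact (h.exp.const_mul (√(2 * π * v))⁻¹).congr_deriv (by rw [gaussianPDFReal]; ring)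

lemma integrable_pow_gaussianReal (μ : ℝ) (v : ℝ≥0) (n : ℕ) :
    Integrable (fun x ↦ x ^ n) (gaussianReal μ v) := by
  have := (memLp_id_gaussianReal (μ := μ) (v := v) n).integrable_norm_pow'
  refine (integrable_norm_iff (by fun_prop)).mp ?_
  simpa only [norm_pow, id] using this

lemma integrable_gaussianPDFReal_mul_pow {v : ℝ≥0} (hv : v ≠ 0) (n : ℕ) :
    Integrable (fun x ↦ gaussianPDFReal 0 v x * x ^ n) := by
  have := integrable_pow_gaussianReal 0 v n
  rw [gaussianReal_of_var_ne_zero _ hv, gaussianPDF_def,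
    integrable_withDensity_iff_integrable_smul' (by fun_prop) (by simp)] at this
  simpa [ENNReal.toReal_ofReal (gaussianPDFReal_nonneg _ _ _)] using this

lemma integral_pow_add_two_gaussianReal (v : ℝ≥0) (n : ℕ) :
    ∫ x, x ^ (n + 2) ∂gaussianReal 0 v = (n + 1) * v * ∫ x, x ^ n ∂gaussianReal 0 v := by
  rcases eq_or_ne v 0 with rfl | hv
  · simp [gaussianReal_zero_var]
  simp only [integral_gaussianReal_eq_integral_smul hv, smul_eq_mul]
  have hderiv : ∀ x, HasDerivAt (fun y ↦ y ^ (n + 1) * gaussianPDFReal 0 v y)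
      ((n + 1) * (gaussianPDFReal 0 v x * x ^ n)
        - (v : ℝ)⁻¹ * (gaussianPDFReal 0 v x * x ^ (n + 2))) x := fun x ↦ by
    refine ((hasDerivAt_pow (n + 1) x).mul (hasDerivAt_gaussianPDFReal 0 v x)).congr_deriv ?_
    push_cast
    ring
  have hint := integrable_gaussianPDFReal_mul_pow hv
  -- Stein's identity: the derivative of `x ^ (n + 1) * φ x` integrates to zero
  have h0 := integral_eq_zero_of_hasDerivAt_of_integrable hderiv
    (((hint n).const_mul _).sub ((hint (n + 2)).const_mul _))
    (by simpa only [mul_comm] using hint (n + 1))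
  rw [integral_sub ((hint n).const_mul _) ((hint (n + 2)).const_mul _), integral_const_mul,
    integral_const_mul, sub_eq_zero] at h0
  have hv' : (v : ℝ) ≠ 0 := by exact_mod_cast hv
  field_simp at h0
  linear_combination -h0

lemma integral_pow_two_mul_gaussianReal (v : ℝ≥0) (k : ℕ) :
    ∫ x, x ^ (2 * k) ∂gaussianReal 0 v = (2 * k - 1)‼ * (v : ℝ) ^ k := by
  induction k with
  | zero => simp
  | succ k ih =>
    rw [show 2 * (k + 1) = 2 * k + 2 by ring, integral_pow_add_two_gaussianReal, ih,
      show 2 * k + 2 - 1 = 2 * k + 1 by omega, Nat.doubleFactorial_add_one]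
    push_cast
    ring

end ProbabilityTheory

section
variable {d : ℕ}

lemma stdGaussianPi_map_dotProduct (w : Fin d → ℝ) :
    (stdGaussianPi d).map (w ⬝ᵥ ·) = gaussianReal 0 (w ⬝ᵥ w).toNNReal := by
  let L : StrongDual ℝ (EuclideanSpace ℝ (Fin d)) := innerSL ℝ (toLp 2 w)
  have hL : (w ⬝ᵥ ·) = L ∘ toLp 2 := by
    ext g
    simp [L, EuclideanSpace.inner_toLp_toLp, dotProduct_comm]
  have hnorm : ‖L‖ ^ 2 = w ⬝ᵥ w := by
    rw [innerSL_apply_norm, ← real_inner_self_eq_norm_sq, EuclideanSpace.inner_toLp_toLp,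
      star_trivial]
  rw [hL, ← Measure.map_map L.continuous.measurable (by fun_prop), stdGaussianPi,
    map_pi_eq_stdGaussian, IsGaussian.map_eq_gaussianReal, integral_strongDual_stdGaussian,
    variance_dual_stdGaussian, hnorm]

lemma integrable_dotProduct_pow (w : Fin d → ℝ) (n : ℕ) :
    Integrable (fun g ↦ (w ⬝ᵥ g) ^ n) (stdGaussianPi d) := by
  have := integrable_pow_gaussianReal 0 (w ⬝ᵥ w).toNNReal n
  rwa [← stdGaussianPi_map_dotProduct, integrable_map_measure (by fun_prop) (by fun_prop)] at this

lemma integral_dotProduct_pow_two_mul (w : Fin d → ℝ) (k : ℕ) :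
    ∫ g, (w ⬝ᵥ g) ^ (2 * k) ∂stdGaussianPi d = (2 * k - 1)‼ * (w ⬝ᵥ w) ^ k := by
  rw [← integral_map (f := fun x ↦ x ^ (2 * k)) (by fun_prop) (by fun_prop),
    stdGaussianPi_map_dotProduct, integral_pow_two_mul_gaussianReal,
    Real.coe_toNNReal _ (by simpa using dotProduct_self_star_nonneg w)]

@[fun_prop]
lemma integrable_dotProduct_pow_mul_dotProduct_pow (p q : Fin d → ℝ) (i j : ℕ) :
    Integrable (fun g ↦ (p ⬝ᵥ g) ^ i * (q ⬝ᵥ g) ^ j) (stdGaussianPi d) := by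
  have hL2 (w : Fin d → ℝ) (n : ℕ) : MemLp (fun g ↦ (w ⬝ᵥ g) ^ n) 2 (stdGaussianPi d) :=
    (memLp_two_iff_integrable_sq (by fun_prop)).2
      (by simpa only [← pow_mul] using integrable_dotProduct_pow w (n * 2))
  exact (hL2 p i).integrable_mul (hL2 q j)

lemma integral_add_smul_dotProduct_pow (p q : Fin d → ℝ) (s : ℝ) (n : ℕ) :
    ∫ g, ((p + s • q) ⬝ᵥ g) ^ n ∂stdGaussianPi d
      = ∑ m ∈ Finset.range (n + 1),
          s ^ m * n.choose m * ∫ g, (p ⬝ᵥ g) ^ (n - m) * (q ⬝ᵥ g) ^ m ∂stdGaussianPi d := by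
  have hexpand (g : Fin d → ℝ) : ((p + s • q) ⬝ᵥ g) ^ n = ∑ m ∈ Finset.range (n + 1),
      s ^ m * n.choose m * ((p ⬝ᵥ g) ^ (n - m) * (q ⬝ᵥ g) ^ m) := by
    rw [add_dotProduct, smul_dotProduct, smul_eq_mul, add_comm, add_pow]
    exact Finset.sum_congr rfl fun m _ ↦ by ring
  simp_rw [hexpand]
  rw [integral_finsetSum _ fun m _ ↦
    (integrable_dotProduct_pow_mul_dotProduct_pow p q _ _).const_mul _]
  simp_rw [integral_const_mul]

lemma sum_choose_mul_integral_dotProduct_pow_mul (p q : Fin d → ℝ) (s : ℝ) (k : ℕ) :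
    ∑ m ∈ Finset.range (2 * k + 1),
        s ^ m * (2 * k).choose m * ∫ g, (p ⬝ᵥ g) ^ (2 * k - m) * (q ⬝ᵥ g) ^ m ∂stdGaussianPi d
      = (2 * k - 1)‼ * (p ⬝ᵥ p + 2 * s * (p ⬝ᵥ q) + s ^ 2 * (q ⬝ᵥ q)) ^ k := by
  rw [← integral_add_smul_dotProduct_pow, integral_dotProduct_pow_two_mul]
  congr 2
  simp only [add_dotProduct, dotProduct_add, smul_dotProduct, dotProduct_smul, smul_eq_mul,
    dotProduct_comm q p]
  ring

lemma integral_dotProduct_mul_dotProduct (p q : Fin d → ℝ) :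
    ∫ g, (p ⬝ᵥ g) * (q ⬝ᵥ g) ∂stdGaussianPi d = p ⬝ᵥ q := by
  have h (s : ℝ) := sum_choose_mul_integral_dotProduct_pow_mul p q s 1
  norm_num [Finset.sum_range_succ] at h
  linear_combination (1 / 4) * h 1 - (1 / 4) * h (-1)

lemma integral_dotProduct_pow_three_mul_dotProduct (p q : Fin d → ℝ) :
    ∫ g, (p ⬝ᵥ g) ^ 3 * (q ⬝ᵥ g) ∂stdGaussianPi d = 3 * (p ⬝ᵥ p) * (p ⬝ᵥ q) := by
  have h (s : ℝ) := sum_choose_mul_integral_dotProduct_pow_mul p q s 2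
  norm_num [Finset.sum_range_succ, Nat.choose] at h
  -- the coefficient of `s` in the polarization identity, solved from its values at `s = ±1, ±2`
  linear_combination (1 / 6) * h 1 - (1 / 6) * h (-1) - (1 / 48) * h 2 + (1 / 48) * h (-2)

lemma integral_dotProduct_pow_three_mul_pow_three (p q : Fin d → ℝ) :
    ∫ g, (p ⬝ᵥ g) ^ 3 * (q ⬝ᵥ g) ^ 3 ∂stdGaussianPi d
      = 9 * (p ⬝ᵥ p) * (q ⬝ᵥ q) * (p ⬝ᵥ q) + 6 * (p ⬝ᵥ q) ^ 3 := by
  have h (s : ℝ) := sum_choose_mul_integral_dotProduct_pow_mul p q s 3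
  norm_num [Finset.sum_range_succ, Nat.choose] at h
  -- the coefficient of `s³`, solved from the values at `s = ±1, ±2, ±3`
  linear_combination (-13 / 960) * h 1 + (13 / 960) * h (-1)
    + (1 / 120) * h 2 - (1 / 120) * h (-2) - (1 / 960) * h 3 + (1 / 960) * h (-3)

theorem integral_hermite3_dotProduct_mul_hermite3_dotProduct (p q : Fin d → ℝ) (t : ℝ) :
    ∫ g, ((p ⬝ᵥ g) ^ 3 - 3 * t * (p ⬝ᵥ g)) * ((q ⬝ᵥ g) ^ 3 - 3 * t * (q ⬝ᵥ g)) ∂stdGaussianPi d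
      = 9 * (p ⬝ᵥ q) * (p ⬝ᵥ p - t) * (q ⬝ᵥ q - t) + 6 * (p ⬝ᵥ q) ^ 3 := by
  have h13 : ∫ g, (p ⬝ᵥ g) * (q ⬝ᵥ g) ^ 3 ∂stdGaussianPi d = 3 * (q ⬝ᵥ q) * (p ⬝ᵥ q) := by
    simpa only [mul_comm, dotProduct_comm q p] using
      integral_dotProduct_pow_three_mul_dotProduct q p
  have hexpand : (fun g ↦ ((p ⬝ᵥ g) ^ 3 - 3 * t * (p ⬝ᵥ g)) * ((q ⬝ᵥ g) ^ 3 - 3 * t * (q ⬝ᵥ g)))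
      = fun g ↦ (p ⬝ᵥ g) ^ 3 * (q ⬝ᵥ g) ^ 3 - 3 * t * ((p ⬝ᵥ g) ^ 3 * (q ⬝ᵥ g) ^ 1)
        - 3 * t * ((p ⬝ᵥ g) ^ 1 * (q ⬝ᵥ g) ^ 3) + 9 * t ^ 2 * ((p ⬝ᵥ g) ^ 1 * (q ⬝ᵥ g) ^ 1) := by
    ext g
    ring
  rw [hexpand, integral_add (by fun_prop) (by fun_prop), integral_sub (by fun_prop) (by fun_prop),
    integral_sub (by fun_prop) (by fun_prop), integral_const_mul, integral_const_mul,
    integral_const_mul]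
  simp only [pow_one]
  rw [integral_dotProduct_pow_three_mul_pow_three, integral_dotProduct_pow_three_mul_dotProduct,
    h13, integral_dotProduct_mul_dotProduct]
  ring

end

namespace Matrix.PosSemidef

variable {n : Type*} [Fintype n] [DecidableEq n] {A : Matrix n n ℝ} (hA : A.PosSemidef)

lemma transpose_sqrt : hA.sqrtᵀ = hA.sqrt := by
  rw [← conjTranspose_eq_transpose_of_trivial, sqrt, conjTranspose_mul, conjTranspose_mul,
    diagonal_conjTranspose, star_eq_conjTranspose, conjTranspose_conjTranspose, star_trivial,
    Matrix.mul_assoc]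

lemma sqrt_mul_self : hA.sqrt * hA.sqrt = A := by
  set U : Matrix n n ℝ := hA.1.eigenvectorUnitary.1
  set D := diagonal ((↑) ∘ (√·) ∘ hA.1.eigenvalues : n → ℝ)
  have hUU : star U * U = 1 := Unitary.coe_star_mul_self hA.1.eigenvectorUnitary
  have hDD : D * D = diagonal ((↑) ∘ hA.1.eigenvalues) := by
    simp [D, diagonal_mul_diagonal, Real.mul_self_sqrt (hA.eigenvalues_nonneg _)]
  conv_rhs => rw [hA.1.spectral_theorem, Unitary.conjStarAlgAut_apply]
  calc U * D * star U * (U * D * star U) = U * (D * (star U * U) * D) * star U := by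
        simp only [Matrix.mul_assoc]
    _ = _ := by rw [hUU, Matrix.mul_one, hDD]; rfl

lemma vecMul_sqrt_dotProduct_vecMul_sqrt (x y : n → ℝ) :
    x ᵥ* hA.sqrt ⬝ᵥ y ᵥ* hA.sqrt = x ⬝ᵥ A *ᵥ y := by
  rw [← dotProduct_mulVec, ← mulVec_transpose, mulVec_mulVec, hA.transpose_sqrt, hA.sqrt_mul_self]

end Matrix.PosSemidef

/-- let `t = Tr(Σ²)` and let `x ~ N(0, Σ)` on `ℝ^d` (realized as
`x = Σ^{1/2} g` with `g` standard Gaussian).  For deterministic `u, v ∈ ℝ^d`,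
`E[(⟨u,x⟩³ − 3t⟨u,x⟩)(⟨v,x⟩³ − 3t⟨v,x⟩)]
  = 9·(uᵀΣv)(uᵀΣu − t)(vᵀΣv − t) + 6·(uᵀΣv)³`. -/
theorem gaussian_hermite3_covariance {d : ℕ} (S : Matrix (Fin d) (Fin d) ℝ)
    (hS : S.PosSemidef) (u v : Fin d → ℝ) :
    ∫ g : Fin d → ℝ,
        ((u ⬝ᵥ hS.sqrt.mulVec g) ^ 3 - 3 * (S * S).trace * (u ⬝ᵥ hS.sqrt.mulVec g))
          * ((v ⬝ᵥ hS.sqrt.mulVec g) ^ 3 - 3 * (S * S).trace * (v ⬝ᵥ hS.sqrt.mulVec g))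
        ∂(stdGaussianPi d)
      = 9 * (u ⬝ᵥ S.mulVec v) * (u ⬝ᵥ S.mulVec u - (S * S).trace)
          * (v ⬝ᵥ S.mulVec v - (S * S).trace)
        + 6 * (u ⬝ᵥ S.mulVec v) ^ 3 := by
  simp_rw [dotProduct_mulVec _ hS.sqrt]
  rw [integral_hermite3_dotProduct_mul_hermite3_dotProduct]
  simp only [hS.vecMul_sqrt_dotProduct_vecMul_sqrt]
end

section
/- Let Σ be a d×d diagonal matrix, let X ∈ ℝ^{n×d} with rows x_iᵀ, define ν_k = (x_1(k)², …, x_n(k)²)ᵀ ∈ ℝⁿ for k = 1,…,d, and let S ∈ ℝ^{(d(d+1)/2)×(d(d+1)/2)} be the diagonal matrix indexed by pairs (k,ℓ), 1 ≤ k ≤ ℓ ≤ d, with diagonal entries S_{(k,ℓ),(k,ℓ)} = 2Σ_{kk}Σ_{ℓℓ} for k < ℓ and 3Σ_{kk}² for k = ℓ. Then (XΣXᵀ)^{⊙2} = (1/2)·X^{(2)} S X^{(2)ᵀ} − (1/2)·Σ_{k=1}^d Σ_{kk}²·ν_k ν_kᵀ. -/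
open Matrix

/-- Index set of pairs `(k, ℓ)` with `k ≤ ℓ` in `Fin d`. -/
abbrev SymIdx (d : ℕ) := {p : Fin d × Fin d // p.1 ≤ p.2}

/-- The reduced tensor `x⁽²⁾ ∈ ℝ^{d(d+1)/2}` of `x ∈ ℝ^d`:
entry `√2·x(k)x(ℓ)` for `k < ℓ`, and `x(k)²` for `k = ℓ`. -/
noncomputable def redTensor {d : ℕ} (x : Fin d → ℝ) (p : SymIdx d) : ℝ :=
  if p.1.1 = p.1.2 then x p.1.1 ^ 2 else Real.sqrt 2 * x p.1.1 * x p.1.2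

/-- The diagonal matrix `S = Σ⁽²⁾` on `SymIdx d`, with diagonal entries
`2Σ_{kk}Σ_{ℓℓ}` for `k < ℓ` and `3Σ_{kk}²` for `k = ℓ`. -/
noncomputable def sigma2Mat {d : ℕ} (S : Matrix (Fin d) (Fin d) ℝ) :
    Matrix (SymIdx d) (SymIdx d) ℝ :=
  Matrix.diagonal fun p : SymIdx d =>
    if p.1.1 = p.1.2 then 3 * S p.1.1 p.1.1 ^ 2 else 2 * (S p.1.1 p.1.1) * (S p.1.2 p.1.2)

open Finset in
lemma aux_diag_sum {d : ℕ} (f : Fin d × Fin d → ℝ) :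
    ∑ p ∈ univ.filter (fun p : Fin d × Fin d => p.1 = p.2), f p = ∑ k, f (k, k) := by
  rw [Finset.sum_filter, Fintype.sum_prod_type]
  simp

open Finset in
lemma aux_split_sum {d : ℕ} (f : Fin d × Fin d → ℝ) :
    ∑ p : Fin d × Fin d, f p
      = ∑ p ∈ univ.filter (fun p : Fin d × Fin d => p.1 < p.2), f p
        + ∑ p ∈ univ.filter (fun p : Fin d × Fin d => p.1 = p.2), f p
        + ∑ p ∈ univ.filter (fun p : Fin d × Fin d => p.2 < p.1), f p := by
  rw [← Finset.sum_filter_add_sum_filter_not Finset.univ (fun p : Fin d × Fin d => p.1 < p.2) f]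
  rw [← Finset.sum_filter_add_sum_filter_not
    (Finset.univ.filter (fun p : Fin d × Fin d => ¬ p.1 < p.2)) (fun p => p.1 = p.2) f]
  have e1 : (Finset.univ.filter (fun p : Fin d × Fin d => ¬ p.1 < p.2)).filter
      (fun p => p.1 = p.2) = Finset.univ.filter (fun p : Fin d × Fin d => p.1 = p.2) := by
    ext p
    simp only [Finset.mem_filter, Finset.mem_univ, true_and]
    exact ⟨fun h => h.2, fun h => ⟨h ▸ lt_irrefl _, h⟩⟩
  have e2 : (Finset.univ.filter (fun p : Fin d × Fin d => ¬ p.1 < p.2)).filter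
      (fun p => ¬ p.1 = p.2) = Finset.univ.filter (fun p : Fin d × Fin d => p.2 < p.1) := by
    ext p
    simp only [Finset.mem_filter, Finset.mem_univ, true_and]
    constructor
    · rintro ⟨h1, h2⟩
      exact lt_of_le_of_ne (not_lt.mp h1) (fun h => h2 h.symm)
    · intro h
      exact ⟨not_lt.mpr h.le, (ne_of_gt h)⟩
  rw [e1, e2]
  ring

open Finset in
lemma aux_key {d : ℕ} (a : Fin d → ℝ) :
    ∑ p : SymIdx d,
        (if p.1.1 = p.1.2 then 3 * a p.1.1 ^ 2 else 4 * (a p.1.1 * a p.1.2))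
      = 2 * (∑ k, a k) ^ 2 + ∑ k, a k ^ 2 := by
  classical
  set g : Fin d × Fin d → ℝ :=
    fun p => if p.1 = p.2 then 3 * a p.1 ^ 2 else 4 * (a p.1 * a p.2) with hg
  have h0 : ∑ p : SymIdx d,
      (if p.1.1 = p.1.2 then 3 * a p.1.1 ^ 2 else 4 * (a p.1.1 * a p.1.2))
      = ∑ p ∈ univ.filter (fun p : Fin d × Fin d => p.1 ≤ p.2), g p :=
    (Finset.sum_subtype _ (by simp) g).symm
  have hle : ∑ p ∈ univ.filter (fun p : Fin d × Fin d => p.1 ≤ p.2), g p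
      = ∑ p ∈ univ.filter (fun p : Fin d × Fin d => p.1 = p.2), g p
        + ∑ p ∈ univ.filter (fun p : Fin d × Fin d => p.1 < p.2), g p := by
    rw [← Finset.sum_filter_add_sum_filter_not
      (Finset.univ.filter (fun p : Fin d × Fin d => p.1 ≤ p.2)) (fun p => p.1 = p.2) g]
    congr 1
    · congr 1
      ext p
      simp only [Finset.mem_filter, Finset.mem_univ, true_and]
      exact ⟨fun h => h.2, fun h => ⟨h.le, h⟩⟩
    · congr 1
      ext p
      simp only [Finset.mem_filter, Finset.mem_univ, true_and]
      exact ⟨fun h => lt_of_le_of_ne h.1 h.2, fun h => ⟨h.le, ne_of_lt h⟩⟩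
  have hdg : ∑ p ∈ univ.filter (fun p : Fin d × Fin d => p.1 = p.2), g p
      = ∑ k, 3 * a k ^ 2 := by
    rw [aux_diag_sum]
    simp [hg]
  have hltg : ∑ p ∈ univ.filter (fun p : Fin d × Fin d => p.1 < p.2), g p
      = 4 * ∑ p ∈ univ.filter (fun p : Fin d × Fin d => p.1 < p.2), a p.1 * a p.2 := by
    rw [Finset.mul_sum]
    refine Finset.sum_congr rfl fun p hp => ?_
    simp only [Finset.mem_filter, Finset.mem_univ, true_and] at hp
    simp [hg, ne_of_lt hp]
  have hswap : ∑ p ∈ univ.filter (fun p : Fin d × Fin d => p.2 < p.1), a p.1 * a p.2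
      = ∑ p ∈ univ.filter (fun p : Fin d × Fin d => p.1 < p.2), a p.1 * a p.2 := by
    refine Finset.sum_equiv (Equiv.prodComm (Fin d) (Fin d)) ?_ ?_
    · intro p; simp
    · intro p hp; simp [mul_comm]
  have hsq : (∑ k, a k) ^ 2 = ∑ p : Fin d × Fin d, a p.1 * a p.2 := by
    rw [sq, Finset.sum_mul_sum, Fintype.sum_prod_type]
  have hsp := aux_split_sum (fun p : Fin d × Fin d => a p.1 * a p.2)
  have hd2 : ∑ p ∈ univ.filter (fun p : Fin d × Fin d => p.1 = p.2), a p.1 * a p.2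
      = ∑ k, a k ^ 2 := by
    rw [aux_diag_sum]; exact Finset.sum_congr rfl fun k _ => by ring
  rw [h0, hle, hdg, hltg]
  rw [hswap, hd2] at hsp
  have h3 : ∑ k, 3 * a k ^ 2 = 3 * ∑ k, a k ^ 2 := by rw [Finset.mul_sum]
  rw [h3, hsq, hsp]
  ring

/-- for diagonal `Σ`, with `ν_k = (x_1(k)², …, x_n(k)²)ᵀ` and `X⁽²⁾` the
matrix with rows the reduced tensors of the rows of `X`,
`(XΣXᵀ)^{⊙2} = (1/2)·X⁽²⁾ S X⁽²⁾ᵀ − (1/2)·∑_k Σ_{kk}²·ν_k ν_kᵀ`. -/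
theorem hadamard_sq_eq_redTensor_decomp {n d : ℕ} (S : Matrix (Fin d) (Fin d) ℝ)
    (hS : S.IsDiag) (X : Matrix (Fin n) (Fin d) ℝ) :
    Matrix.hadamard (X * S * Xᵀ) (X * S * Xᵀ)
      = (1 / 2 : ℝ) •
          (Matrix.of (fun i p => redTensor (X i) p) * sigma2Mat S *
            (Matrix.of (fun (i : Fin n) (p : SymIdx d) => redTensor (X i) p))ᵀ)
        - (1 / 2 : ℝ) •
          ∑ k : Fin d, (S k k ^ 2) •
            vecMulVec (fun i : Fin n => X i k ^ 2) (fun i : Fin n => X i k ^ 2) := by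
  have hsqrt : Real.sqrt 2 * Real.sqrt 2 = 2 := Real.mul_self_sqrt (by norm_num)
  have hSd : S = Matrix.diagonal (fun k => S k k) := by
    ext k l
    rcases eq_or_ne k l with h | h
    · subst h; simp
    · rw [Matrix.diagonal_apply_ne _ h, hS h]
  ext i j
  set a : Fin d → ℝ := fun k => S k k * (X i k * X j k) with ha
  have hXS : (X * S * Xᵀ) i j = ∑ k, a k := by
    rw [hSd, Matrix.mul_apply]
    simp only [Matrix.mul_diagonal, Matrix.transpose_apply, ha]
    exact Finset.sum_congr rfl fun k _ => by ring
  have hMid : (Matrix.of (fun i p => redTensor (X i) p) * sigma2Mat S *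
      (Matrix.of (fun (i : Fin n) (p : SymIdx d) => redTensor (X i) p))ᵀ) i j
      = ∑ p : SymIdx d,
          (if p.1.1 = p.1.2 then 3 * a p.1.1 ^ 2 else 4 * (a p.1.1 * a p.1.2)) := by
    rw [Matrix.mul_apply]
    simp only [sigma2Mat, Matrix.mul_diagonal, Matrix.transpose_apply, Matrix.of_apply]
    refine Finset.sum_congr rfl fun p _ => ?_
    rcases eq_or_ne p.1.1 p.1.2 with h | h
    · simp only [redTensor, if_pos h, ha]
      ring
    · simp only [redTensor, if_neg h, ha]
      linear_combination (S p.1.1 p.1.1 * S p.1.2 p.1.2 *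
        X i p.1.1 * X i p.1.2 * X j p.1.1 * X j p.1.2 * 2) * hsqrt
  have hNu : (∑ k : Fin d, (S k k ^ 2) •
      vecMulVec (fun i : Fin n => X i k ^ 2) (fun i : Fin n => X i k ^ 2)) i j
      = ∑ k, a k ^ 2 := by
    simp only [Matrix.sum_apply, Matrix.smul_apply, Matrix.vecMulVec_apply, smul_eq_mul, ha]
    exact Finset.sum_congr rfl fun k _ => by ring
  simp only [Matrix.hadamard_apply, Matrix.sub_apply, Matrix.smul_apply, smul_eq_mul,
    hXS, hMid, hNu, aux_key]
  ring
end
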